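/- There exists W' ⊆ W with ∑_{w∈W'} w = K if and only if the W-votes in the maximin construction can be replaced (each by an arbitrary linear order over {p,a,b,c}) so that p wins the resulting weighted maximin election with tie-breaking p ≻ a ≻ b ≻ c. -/

import Mathlib

/-- The four candidates. -/
inductive Cand : Type
  | p | a | b | c
deriving DecidableEq

open Cand

/-- Weighted pairwise margin `D(x,y)`: total weight preferring `x` to `y` minus total
weight preferring `y` to `x` (each vote is a pair (weight, full ranking list)). -/
def marg (E : Multiset (ℕ × List Cand)) (x y : Cand) : ℤ :=
  (E.map fun v => if v.2.idxOf x < v.2.idxOf y then (v.1 : ℤ) else -(v.1 : ℤ)).sum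

/-- Maximin score: minimum pairwise margin against the other candidates. -/
def maximinScore (E : Multiset (ℕ × List Cand)) : Cand → ℤ
  | Cand.p => min (marg E Cand.p Cand.a) (min (marg E Cand.p Cand.b) (marg E Cand.p Cand.c))
  | Cand.a => min (marg E Cand.a Cand.p) (min (marg E Cand.a Cand.b) (marg E Cand.a Cand.c))
  | Cand.b => min (marg E Cand.b Cand.p) (min (marg E Cand.b Cand.a) (marg E Cand.b Cand.c))
  | Cand.c => min (marg E Cand.c Cand.p) (min (marg E Cand.c Cand.a) (marg E Cand.c Cand.b))

/-- `x` wins w.r.t. a score function and a tie-breaking priority order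
(lower priority value = preferred by the tie-breaking order). -/
def Wins {S : Type} [LinearOrder S] (score : Cand → S) (prio : Cand → ℕ) (x : Cand) : Prop :=
  ∀ y, y ≠ x → score y < score x ∨ (score y = score x ∧ prio x < prio y)

/-- Tie-breaking order `p ≻ a ≻ b ≻ c`. -/
def prioPABC : Cand → ℕ
  | Cand.p => 0
  | Cand.a => 1
  | Cand.b => 2
  | Cand.c => 3

/-
Write F(x,y) for the weight of the W-votes ranking x above y, so that
D(x,y) = 2 F(x,y) - 2K + D₀(x,y) with D₀ the margin of the three fixed votes.
If W' sums to K, let W' vote p ≻ a ≻ b ≻ c and the rest p ≻ b ≻ c ≻ a: all four candidates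
then have maximin score -K and the tie-breaking elects p.
Conversely p's score is at most D(p,a) ≤ -K, so every candidate has score ≤ -K. For c this
forces a or b to be unanimously above c. A unanimous a ≻ c forces, through a's score, a
unanimous b ≻ a, hence a unanimous b ≻ c, which b's score forbids. So b ≻ c is unanimous,
F(a,b) ≤ F(a,c), and the scores of a and b pin F(a,b) = K: the W-votes ranking a above b
form W'.
-/

section PrefWeight

variable {α : Type*} [DecidableEq α]

def prefWeight (V : Multiset (ℕ × List α)) (x y : α) : ℕ :=
  ((V.filter fun v => v.2.idxOf x < v.2.idxOf y).map Prod.fst).sum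

variable {V : Multiset (ℕ × List α)} {x y : α}

lemma prefWeight_add_prefWeight (hxy : x ≠ y) (hV : ∀ v ∈ V, x ∈ v.2 ∧ y ∈ v.2) :
    prefWeight V x y + prefWeight V y x = (V.map Prod.fst).sum := by
  have hswap : V.filter (fun v => v.2.idxOf y < v.2.idxOf x)
      = V.filter (fun v => ¬ v.2.idxOf x < v.2.idxOf y) := by
    refine Multiset.filter_congr fun v hv => ?_
    have hne : v.2.idxOf x ≠ v.2.idxOf y := fun h => hxy ((List.idxOf_inj (hV v hv).1).mp h)
    omega
  rw [prefWeight, prefWeight, hswap, ← Multiset.sum_add, ← Multiset.map_add,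
    Multiset.filter_add_not]

lemma prefWeight_eq_sum_iff (hV : ∀ v ∈ V, 0 < v.1) :
    prefWeight V x y = (V.map Prod.fst).sum ↔ ∀ v ∈ V, v.2.idxOf x < v.2.idxOf y := by
  refine ⟨fun h v hv => ?_, fun h => by rw [prefWeight, Multiset.filter_eq_self.mpr h]⟩
  by_contra hxy
  have hsplit := congrArg (fun s => (s.map Prod.fst).sum)
    (Multiset.filter_add_not (fun v => v.2.idxOf x < v.2.idxOf y) V)
  simp only [Multiset.map_add, Multiset.sum_add] at hsplit
  have hzero : ((V.filter fun v => ¬ v.2.idxOf x < v.2.idxOf y).map Prod.fst).sum = 0 := by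
    rw [prefWeight] at h; omega
  have := Multiset.sum_eq_zero_iff.mp hzero v.1
    (Multiset.mem_map_of_mem _ (Multiset.mem_filter.mpr ⟨hv, hxy⟩))
  exact (hV v hv).ne' this

lemma prefWeight_le_prefWeight {x' y' : α}
    (h : ∀ v ∈ V, v.2.idxOf x < v.2.idxOf y → v.2.idxOf x' < v.2.idxOf y') :
    prefWeight V x y ≤ prefWeight V x' y' := by
  have hle : V.filter (fun v => v.2.idxOf x < v.2.idxOf y)
      ≤ V.filter (fun v => v.2.idxOf x' < v.2.idxOf y') :=
    Multiset.le_filter.mpr ⟨Multiset.filter_le _ _, fun v hv =>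
      h v (Multiset.mem_of_mem_filter hv) (Multiset.mem_filter.mp hv).2⟩
  obtain ⟨u, hu⟩ := Multiset.le_iff_exists_add.mp (Multiset.map_le_map (f := Prod.fst) hle)
  simp only [prefWeight, hu, Multiset.sum_add, Nat.le_add_right]

end PrefWeight

lemma marg_eq_two_mul_prefWeight_sub (V : Multiset (ℕ × List Cand)) (x y : Cand) :
    marg V x y = 2 * (prefWeight V x y : ℤ) - (V.map Prod.fst).sum := by
  induction V using Multiset.induction_on with
  | empty => simp [marg, prefWeight]
  | cons v s ih =>
    by_cases h : v.2.idxOf x < v.2.idxOf y <;>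
      simp [marg, prefWeight, h] at ih ⊢ <;> omega

lemma marg_add (E₁ E₂ : Multiset (ℕ × List Cand)) (x y : Cand) :
    marg (E₁ + E₂) x y = marg E₁ x y + marg E₂ x y := by
  simp [marg]

lemma marg_map_const (S : Multiset ℕ) (l : List Cand) (x y : Cand) :
    marg (S.map fun w => (w, l)) x y = S.sum * marg {(1, l)} x y := by
  by_cases h : l.idxOf x < l.idxOf y <;> simp [marg, h]

lemma marg_map_mul_fst (k : ℕ) (E : Multiset (ℕ × List Cand)) (x y : Cand) :
    marg (E.map fun v => (k * v.1, v.2)) x y = k * marg E x y := by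
  simp only [marg, Multiset.map_map, Function.comp_def, ← Multiset.sum_map_mul_left]
  congr 1
  refine Multiset.map_congr rfl fun v _ => ?_
  split <;> push_cast <;> ring

lemma maximinScore_eq_mul {E E' : Multiset (ℕ × List Cand)} {k : ℤ} (hk : 0 ≤ k)
    (h : ∀ x y, marg E x y = k * marg E' x y) (x : Cand) :
    maximinScore E x = k * maximinScore E' x := by
  cases x <;> simp only [maximinScore, h, mul_min_of_nonneg _ _ hk]

lemma Wins.le {S : Type} [LinearOrder S] {score : Cand → S} {prio : Cand → ℕ} {x : Cand}
    (h : Wins score prio x) (y : Cand) : score y ≤ score x := by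
  by_cases hy : y = x
  · rw [hy]
  · rcases h y hy with hlt | ⟨heq, -⟩
    exacts [hlt.le, heq.le]

lemma Wins.comp_strictMono {S T : Type} [LinearOrder S] [LinearOrder T] {score : Cand → S}
    {prio : Cand → ℕ} {x : Cand} (h : Wins score prio x) {g : S → T} (hg : StrictMono g) :
    Wins (g ∘ score) prio x := fun y hy =>
  (h y hy).imp (fun hlt => hg hlt) fun ⟨heq, hprio⟩ => ⟨congrArg g heq, hprio⟩

def fixedVotes (K : ℕ) : Multiset (ℕ × List Cand) :=
  {(K, [c, a, b, p]), (K, [b, c, a, p]), (K, [a, c, b, p])}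

lemma marg_fixedVotes (K : ℕ) (x y : Cand) :
    marg (fixedVotes K) x y = K * marg (fixedVotes 1) x y := by
  rw [← marg_map_mul_fst]
  simp [fixedVotes]

lemma mem_of_perm {l : List Cand} (hl : l.Perm [p, a, b, c]) (x : Cand) : x ∈ l :=
  hl.mem_iff.mpr (by cases x <;> simp)

lemma wins_of_sum_eq {K : ℕ} (hK : 0 < K) {W' T : Multiset ℕ} (hW' : W'.sum = K)
    (hT : T.sum = K) :
    Wins (maximinScore (W'.map (·, [p, a, b, c]) + T.map (·, [p, b, c, a]) + fixedVotes K))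
      prioPABC p := by
  -- All margins are K times those of this five-vote profile, which is checked by evaluation.
  set E₁ : Multiset (ℕ × List Cand) := {(1, [p, a, b, c])} + {(1, [p, b, c, a])} + fixedVotes 1
  have hE₁ : Wins (maximinScore E₁) prioPABC p := by
    intro y hy
    cases y <;> first | exact absurd rfl hy | decide
  have hmarg : ∀ x y, marg (W'.map (·, [p, a, b, c]) + T.map (·, [p, b, c, a]) + fixedVotes K) x y
      = K * marg E₁ x y := by
    intro x y
    simp only [E₁, marg_add, marg_map_const, marg_fixedVotes K, hW', hT]
    ring
  rw [show maximinScore _ = (fun s => (K : ℤ) * s) ∘ maximinScore E₁ from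
    funext (maximinScore_eq_mul (by positivity) hmarg)]
  exact hE₁.comp_strictMono (strictMono_mul_left_of_pos (by exact_mod_cast hK))

section

variable {K : ℕ} {V : Multiset (ℕ × List Cand)}

lemma marg_add_fixedVotes (hV : (V.map Prod.fst).sum = 2 * K) (x y : Cand) :
    marg (V + fixedVotes K) x y
      = 2 * (prefWeight V x y : ℤ) - 2 * K + K * marg (fixedVotes 1) x y := by
  rw [marg_add, marg_eq_two_mul_prefWeight_sub, hV, marg_fixedVotes]
  push_cast
  ring

lemma maximinScore_le_neg_of_wins (hV : (V.map Prod.fst).sum = 2 * K)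
    (hperm : ∀ v ∈ V, v.2.Perm [p, a, b, c])
    (hwin : Wins (maximinScore (V + fixedVotes K)) prioPABC p) (x : Cand) :
    maximinScore (V + fixedVotes K) x ≤ -K := by
  have hpa := prefWeight_add_prefWeight (V := V) (x := p) (y := a) (by decide)
    fun v hv => ⟨mem_of_perm (hperm v hv) p, mem_of_perm (hperm v hv) a⟩
  calc maximinScore (V + fixedVotes K) x ≤ maximinScore (V + fixedVotes K) p := hwin.le x
    _ ≤ marg (V + fixedVotes K) p a := min_le_left _ _
    _ ≤ -K := by
      rw [marg_add_fixedVotes hV, show marg (fixedVotes 1) p a = -3 by decide]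
      omega

lemma prefWeight_constraints_of_wins (hK : 0 < K) (hV : (V.map Prod.fst).sum = 2 * K)
    (hperm : ∀ v ∈ V, v.2.Perm [p, a, b, c])
    (hwin : Wins (maximinScore (V + fixedVotes K)) prioPABC p) :
    (prefWeight V c a = 0 ∨ prefWeight V c b = 0) ∧
      (prefWeight V a b = 0 ∨ prefWeight V a c ≤ K) ∧
      (prefWeight V b a ≤ K ∨ prefWeight V b c ≤ K) := by
  have hle := maximinScore_le_neg_of_wins hV hperm hwin
  have ha := hle a
  have hb := hle b
  have hc := hle c
  obtain ⟨hap, hab, hac, hbp, hba, hbc, hcp, hca, hcb⟩ :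
      marg (fixedVotes 1) a p = 3 ∧ marg (fixedVotes 1) a b = 1 ∧ marg (fixedVotes 1) a c = -1 ∧
      marg (fixedVotes 1) b p = 3 ∧ marg (fixedVotes 1) b a = -1 ∧ marg (fixedVotes 1) b c = -1 ∧
      marg (fixedVotes 1) c p = 3 ∧ marg (fixedVotes 1) c a = 1 ∧ marg (fixedVotes 1) c b = 1 := by
    decide
  simp only [maximinScore, min_le_iff, marg_add_fixedVotes hV, hap, hab, hac, hbp, hba, hbc, hcp,
    hca, hcb] at ha hb hc
  omega

lemma prefWeight_a_b_eq_of_wins (hK : 0 < K) (hpos : ∀ v ∈ V, 0 < v.1)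
    (hV : (V.map Prod.fst).sum = 2 * K) (hperm : ∀ v ∈ V, v.2.Perm [p, a, b, c])
    (hwin : Wins (maximinScore (V + fixedVotes K)) prioPABC p) :
    prefWeight V a b = K := by
  have hcompl : ∀ x y, x ≠ y → prefWeight V x y + prefWeight V y x = 2 * K := fun x y hxy =>
    hV ▸ prefWeight_add_prefWeight hxy fun v hv =>
      ⟨mem_of_perm (hperm v hv) x, mem_of_perm (hperm v hv) y⟩
  have hab_ba := hcompl a b (by decide)
  have hac_ca := hcompl a c (by decide)
  have hbc_cb := hcompl b c (by decide)
  obtain ⟨hc, ha, hb⟩ := prefWeight_constraints_of_wins hK hV hperm hwin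
  rcases hc with hca | hcb
  · have hac_all : ∀ v ∈ V, v.2.idxOf a < v.2.idxOf c :=
      (prefWeight_eq_sum_iff hpos).mp (by omega)
    have hba_all : ∀ v ∈ V, v.2.idxOf b < v.2.idxOf a :=
      (prefWeight_eq_sum_iff hpos).mp (by omega)
    have hbc_all : prefWeight V b c = (V.map Prod.fst).sum :=
      (prefWeight_eq_sum_iff hpos).mpr fun v hv => (hba_all v hv).trans (hac_all v hv)
    omega
  · have hbc_all : ∀ v ∈ V, v.2.idxOf b < v.2.idxOf c :=
      (prefWeight_eq_sum_iff hpos).mp (by omega)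
    have hab_le_ac : prefWeight V a b ≤ prefWeight V a c :=
      prefWeight_le_prefWeight fun v hv h => h.trans (hbc_all v hv)
    omega

end

/-- Main equivalence of the maximin hardness reduction: `W` (a multiset of positive
integers with `∑ W = 2K`) has a sub-multiset summing to `K` iff the `W`-votes (originally
`p ≻ a ≻ b ≻ c`) can be replaced by arbitrary linear orders over `{p,a,b,c}` so that `p`
wins the weighted maximin election (fixed votes `c ≻ a ≻ b ≻ p`, `b ≻ c ≻ a ≻ p`,
`a ≻ c ≻ b ≻ p` each of weight `K`) with tie-breaking `p ≻ a ≻ b ≻ c`. -/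
theorem stmt_6 (K : ℕ) (hK : 0 < K) (W : Multiset ℕ)
    (hpos : ∀ w ∈ W, 0 < w) (hsum : W.sum = 2 * K) :
    (∃ W' ≤ W, W'.sum = K) ↔
      (∃ V : Multiset (ℕ × List Cand), V.map Prod.fst = W ∧
        (∀ v ∈ V, v.2.Perm [p, a, b, c]) ∧
        Wins (maximinScore
          (V + {(K, [c, a, b, p]), (K, [b, c, a, p]), (K, [a, c, b, p])})) prioPABC p) := by
  constructor
  · rintro ⟨W', hle, hW'⟩
    obtain ⟨T, rfl⟩ := Multiset.le_iff_exists_add.mp hle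
    refine ⟨W'.map (·, [p, a, b, c]) + T.map (·, [p, b, c, a]), by simp [Multiset.map_map], ?_,
      wins_of_sum_eq hK hW' (by rw [Multiset.sum_add] at hsum; omega)⟩
    simp only [Multiset.mem_add, Multiset.mem_map]
    rintro v (⟨w, -, rfl⟩ | ⟨w, -, rfl⟩)
    exacts [List.Perm.refl _, (by decide : [p, b, c, a].Perm [p, a, b, c])]
  · rintro ⟨V, rfl, hperm, hwin⟩
    exact ⟨_, Multiset.map_le_map (Multiset.filter_le _ _),
      prefWeight_a_b_eq_of_wins hK (fun v hv => hpos v.1 (Multiset.mem_map_of_mem _ hv)) hsum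
        hperm hwin⟩
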